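/- Under Protocol OR the permutation network spreads strictly more than the repeated path network: for N ≥ 8 agents, seed set S₀ = {j}, and all indices with 3 ≤ i ≤ N−3, j ∈ {2, …, i−2} ∪ {i+2, …, N−2}, and |i−j| > 2, the steady-state activation probability of agent i on the duplex permutation network 𝒢_P with all agents using Protocol OR strictly exceeds that on the duplex repeated path network 𝒢_R with all agents using Protocol OR: ℙ^{𝒢_P, OR}(i) > ℙ^{𝒢_R, OR}(i) = (3/4)^{|i−j|}. Equivalently, (3/4)^{|i−j|} + (1/2)(3/4)^{N−|i−j|−3} − (1/2)(3/4)^{N−5} > (3/4)^{|i−j|} whenever |i−j| > 2. -/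

import Mathlib

open MeasureTheory

inductive Protocol
  | OR
  | AND
deriving DecidableEq

noncomputable def ltmStep {n m : ℕ} (w : Fin m → Fin n → Fin n → ℝ)
    (u : Fin n → Protocol) (μ : Fin n → Fin m → ℝ)
    (A : Finset (Fin n)) : Finset (Fin n) :=
  A ∪ Finset.univ.filter fun i =>
    (u i = Protocol.OR ∧ ∃ k, μ i k < ∑ j ∈ A, w k i j) ∨
    (u i = Protocol.AND ∧ ∀ k, μ i k < ∑ j ∈ A, w k i j)

noncomputable def ltmSS {n m : ℕ} (w : Fin m → Fin n → Fin n → ℝ)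
    (u : Fin n → Protocol) (S₀ : Finset (Fin n))
    (μ : Fin n → Fin m → ℝ) : Finset (Fin n) :=
  (ltmStep w u μ)^[n] S₀

noncomputable def thMeasure (n m : ℕ) : Measure (Fin n → Fin m → ℝ) :=
  Measure.pi fun _ => Measure.pi fun _ => volume.restrict (Set.Icc (0:ℝ) 1)

noncomputable def pLTM {n m : ℕ} (w : Fin m → Fin n → Fin n → ℝ)
    (u : Fin n → Protocol) (S₀ : Finset (Fin n)) (i : Fin n) : ℝ :=
  (thMeasure n m {μ | i ∈ ltmSS w u S₀ μ}).toReal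

def lemStep {n m : ℕ} (S₀ : Finset (Fin n)) (u : Fin n → Protocol)
    (σ : Fin n → Fin m → Fin n) (A : Finset (Fin n)) : Finset (Fin n) :=
  S₀ ∪ A ∪ Finset.univ.filter fun i =>
    (u i = Protocol.OR ∧ ∃ k, σ i k ∈ A) ∨
    (u i = Protocol.AND ∧ ∀ k, σ i k ∈ A)

def UReachable {n m : ℕ} (S₀ : Finset (Fin n)) (u : Fin n → Protocol)
    (σ : Fin n → Fin m → Fin n) (i : Fin n) : Prop :=
  i ∈ (lemStep S₀ u σ)^[n] S₀

instance {n m : ℕ} (S₀ : Finset (Fin n)) (u : Fin n → Protocol)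
    (σ : Fin n → Fin m → Fin n) (i : Fin n) : Decidable (UReachable S₀ u σ i) := by
  unfold UReachable; infer_instance

noncomputable def rProb {n m : ℕ} (w : Fin m → Fin n → Fin n → ℝ)
    (S₀ : Finset (Fin n)) (u : Fin n → Protocol) (i : Fin n) : ℝ :=
  ∑ σ : Fin n → Fin m → Fin n,
    if UReachable S₀ u σ i then ∏ a : Fin n, ∏ k : Fin m, w k a (σ a k) else 0

noncomputable def casCen {n m : ℕ} (w : Fin m → Fin n → Fin n → ℝ)
    (u : Fin n → Protocol) (j : Fin n) : ℝ :=
  ∑ i : Fin n, pLTM w u {j} i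

noncomputable def pathW (N : ℕ) (i j : Fin N) : ℝ :=
  if j.val = i.val + 1 ∨ i.val = j.val + 1 then
    (if i.val = 0 ∨ i.val = N - 1 then 1 else 1/2)
  else 0

noncomputable def cycleW (N : ℕ) (i j : Fin N) : ℝ :=
  if (i.val + 1) % N = j.val ∨ (j.val + 1) % N = i.val then 1/2 else 0

noncomputable def permW2 (N : ℕ) (i j : Fin N) : ℝ :=
  if ((i.val + 1) % N = j.val ∨ (j.val + 1) % N = i.val) ∧
      ¬((i.val = N - 2 ∧ j.val = N - 1) ∨ (i.val = N - 1 ∧ j.val = N - 2)) then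
    (if i.val = N - 2 ∨ i.val = N - 1 then 1 else 1/2)
  else 0

/-!
On the repeated path, with every agent on Protocol OR, an interior agent receives weight `1/2`
from each active neighbour in each layer. So the signal from `j` crosses an agent of the path
segment between `j` and `i` exactly when one of its two thresholds is below `1/2`: if both are
above, the agent can only ever see weight `1/2` from the seed's side and activation never passes
it. These are independent events of probability `3/4` each, giving `(3/4) ^ |i - j|`.

On the permutation network the same event still activates `i`, because the second layer agrees
with the path away from its removed edge. But `i` is also activated on a disjoint event of
positive probability: the midpoint between `i` and `j` is blocked, and every agent off the
segment has both thresholds below `1/2`, so the signal goes round the other way through the edge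
`{N - 1, 0}` (0-based) that only the second layer has.

Since `n` rounds of an inflationary update on `n` agents saturate, the steady state is closed
under the update, which lets activation be followed one edge at a time.
-/

/-- Once a step adds nothing, no later step does; and `card α + 1` steps cannot all add an
element. -/
theorem Finset.isFixedPt_iterate_card {α : Type*} [Fintype α] {f : Finset α → Finset α}
    (hf : ∀ s, s ⊆ f s) (s : Finset α) : Function.IsFixedPt f (f^[Fintype.card α] s) := by
  by_contra hne
  have hgrow : ∀ t ≤ Fintype.card α + 1, t ≤ (f^[t] s).card := by
    intro t
    induction t with
    | zero => exact fun _ => Nat.zero_le _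
    | succ t ih =>
      intro ht
      have hlt : f^[t] s ⊂ f^[t + 1] s := by
        rw [Function.iterate_succ_apply']
        refine (hf _).ssubset_of_ne fun heq => hne ?_
        have hfix : Function.IsFixedPt f (f^[t] s) := heq.symm
        obtain ⟨r, hr⟩ : ∃ r, Fintype.card α = r + t :=
          ⟨_, (Nat.sub_add_cancel (by omega)).symm⟩
        rw [hr, Function.iterate_add_apply, (hfix.iterate r).eq]
        exact hfix
      exact (ih (by omega)).trans_lt (Finset.card_lt_card hlt)
  have := Finset.card_le_univ (f^[Fintype.card α + 1] s)
  have := hgrow _ le_rfl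
  omega

section Dynamics

variable {n m : ℕ} (w : Fin m → Fin n → Fin n → ℝ) (u : Fin n → Protocol)
  (S₀ : Finset (Fin n)) (μ : Fin n → Fin m → ℝ)

theorem subset_ltmStep (A : Finset (Fin n)) : A ⊆ ltmStep w u μ A :=
  Finset.subset_union_left

theorem subset_ltmSS : S₀ ⊆ ltmSS w u S₀ μ :=
  Function.id_le_iterate_of_id_le (subset_ltmStep w u μ) n S₀

theorem ltmStep_ltmSS : ltmStep w u μ (ltmSS w u S₀ μ) = ltmSS w u S₀ μ := by
  have := Finset.isFixedPt_iterate_card (subset_ltmStep w u μ) S₀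
  rwa [Fintype.card_fin] at this

theorem mem_ltmStep_OR_iff {A : Finset (Fin n)} {x : Fin n} :
    x ∈ ltmStep w (fun _ => .OR) μ A ↔ x ∈ A ∨ ∃ k, μ x k < ∑ y ∈ A, w k x y := by
  simp [ltmStep]

variable {w S₀ μ}

theorem mem_ltmSS_of_lt_weight (hw : ∀ k x y, 0 ≤ w k x y) {x y : Fin n} {k : Fin m}
    (hx : x ∈ ltmSS w (fun _ => .OR) S₀ μ) (hy : μ y k < w k y x) :
    y ∈ ltmSS w (fun _ => .OR) S₀ μ := by
  rw [← ltmStep_ltmSS, mem_ltmStep_OR_iff]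
  exact Or.inr ⟨k, hy.trans_le (Finset.single_le_sum (fun z _ => hw k y z) hx)⟩

theorem ltmSS_subset_of_forall_sum_le (hw : ∀ k x y, 0 ≤ w k x y) (P : Finset (Fin n))
    (hS₀ : S₀ ⊆ P) (hP : ∀ x ∉ P, ∀ k, ∑ y ∈ P, w k x y ≤ μ x k) :
    ltmSS w (fun _ => .OR) S₀ μ ⊆ P := by
  have hstep : ∀ A ⊆ P, ltmStep w (fun _ => .OR) μ A ⊆ P := by
    intro A hA x hx
    rcases (mem_ltmStep_OR_iff w μ).1 hx with hx | ⟨k, hk⟩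
    · exact hA hx
    by_contra hxP
    have hsum := Finset.sum_le_sum_of_subset_of_nonneg hA fun y _ _ => hw k x y
    exact (hk.trans_le hsum).not_ge (hP x hxP k)
  exact Set.MapsTo.iterate (s := {A | A ⊆ P}) hstep n hS₀

theorem mem_ltmSS_of_ascending (hw : ∀ k x y, 0 ≤ w k x y) {a b : Fin n} (hab : a ≤ b)
    (ha : a ∈ ltmSS w (fun _ => .OR) S₀ μ)
    (hstep : ∀ x y : Fin n, a ≤ x → y.val = x.val + 1 → y ≤ b →
      ∃ k, μ y k < w k y x) :
    b ∈ ltmSS w (fun _ => .OR) S₀ μ := by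
  suffices h : ∀ d, a.val + d ≤ b.val → ∀ y : Fin n, y.val = a.val + d →
      y ∈ ltmSS w (fun _ => .OR) S₀ μ from
    h (b.val - a.val) (by omega) b (by rw [Fin.le_def] at hab; omega)
  intro d
  induction d with
  | zero => intro _ y hy; rwa [Fin.ext hy]
  | succ d ih =>
    intro hd y hy
    have hx := ih (by omega) ⟨a.val + d, by omega⟩ rfl
    obtain ⟨k, hk⟩ := hstep ⟨a.val + d, by omega⟩ y (by rw [Fin.le_def]; simp)
      (by simp only; omega) (by rw [Fin.le_def]; omega)
    exact mem_ltmSS_of_lt_weight hw hx hk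

theorem mem_ltmSS_of_descending (hw : ∀ k x y, 0 ≤ w k x y) {a b : Fin n} (hba : b ≤ a)
    (ha : a ∈ ltmSS w (fun _ => .OR) S₀ μ)
    (hstep : ∀ x y : Fin n, x ≤ a → x.val = y.val + 1 → b ≤ y →
      ∃ k, μ y k < w k y x) :
    b ∈ ltmSS w (fun _ => .OR) S₀ μ := by
  suffices h : ∀ d, d ≤ a.val - b.val → ∀ y : Fin n, y.val = a.val - d →
      y ∈ ltmSS w (fun _ => .OR) S₀ μ from
    h (a.val - b.val) le_rfl b (by rw [Fin.le_def] at hba; omega)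
  intro d
  induction d with
  | zero => intro _ y hy; rwa [Fin.ext hy]
  | succ d ih =>
    intro hd y hy
    have hx := ih (by omega) ⟨a.val - d, by omega⟩ rfl
    obtain ⟨k, hk⟩ := hstep ⟨a.val - d, by omega⟩ y (by rw [Fin.le_def]; simp)
      (by simp only; omega) (by rw [Fin.le_def]; omega)
    exact mem_ltmSS_of_lt_weight hw hx hk

end Dynamics

section Weights

variable {N : ℕ} {x y : Fin N}

theorem pathW_nonneg (x y : Fin N) : 0 ≤ pathW N x y := by
  unfold pathW; split_ifs <;> norm_num

theorem permW2_nonneg (x y : Fin N) : 0 ≤ permW2 N x y := by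
  unfold permW2; split_ifs <;> norm_num

theorem pathW_eq_zero (h : ¬(y.val = x.val + 1 ∨ x.val = y.val + 1)) : pathW N x y = 0 :=
  if_neg h

theorem half_le_pathW (h : y.val = x.val + 1 ∨ x.val = y.val + 1) : 1/2 ≤ pathW N x y := by
  unfold pathW; rw [if_pos h]; split_ifs <;> norm_num

theorem pathW_le_half (hx₀ : 1 ≤ x.val) (hx₁ : x.val + 2 ≤ N) : pathW N x y ≤ 1/2 := by
  unfold pathW; rw [if_neg (show ¬(x.val = 0 ∨ x.val = N - 1) by omega)]; split_ifs <;> norm_num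

theorem half_le_permW2 (h : y.val = x.val + 1 ∨ x.val = y.val + 1) (hx : x.val + 3 ≤ N) :
    1/2 ≤ permW2 N x y := by
  have := y.isLt
  unfold permW2
  rw [if_pos]
  · split_ifs <;> norm_num
  refine ⟨?_, by omega⟩
  rcases h with h | h
  · left; rw [h, Nat.mod_eq_of_lt (by omega)]
  · right; rw [h, Nat.mod_eq_of_lt (by omega)]

theorem half_le_permW2_of_wrap (hN : 3 ≤ N)
    (h : (x.val + 1 = N ∧ y.val = 0) ∨ (x.val = 0 ∧ y.val + 1 = N)) :
    1/2 ≤ permW2 N x y := by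
  unfold permW2
  rw [if_pos]
  · split_ifs <;> norm_num
  refine ⟨?_, by omega⟩
  rcases h with ⟨hx, hy⟩ | ⟨hx, hy⟩
  · left; rw [hx, hy, Nat.mod_self]
  · right; rw [hx, hy, Nat.mod_self]

theorem sum_pathW_le_half (hx₀ : 1 ≤ x.val) (hx₁ : x.val + 2 ≤ N) (A : Finset (Fin N))
    (hA : ∀ y ∈ A, ∀ z ∈ A, (y.val = x.val + 1 ∨ x.val = y.val + 1) →
      (z.val = x.val + 1 ∨ x.val = z.val + 1) → y = z) :
    ∑ y ∈ A, pathW N x y ≤ 1/2 := by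
  by_cases h : ∃ y ∈ A, y.val = x.val + 1 ∨ x.val = y.val + 1
  · obtain ⟨y, hy, hxy⟩ := h
    rw [Finset.sum_eq_single_of_mem y hy
      fun z hz hzy => pathW_eq_zero fun hxz => hzy (hA z hz y hy hxz hxy)]
    exact pathW_le_half hx₀ hx₁
  · rw [Finset.sum_eq_zero fun y hy => pathW_eq_zero fun hxy => h ⟨y, hy, hxy⟩]
    norm_num

end Weights

def pathSegment {N : ℕ} (j i : Fin N) : Finset (Fin N) :=
  Finset.Ioc j i ∪ Finset.Ico i j

section Path

variable {N m : ℕ} {μ : Fin N → Fin m → ℝ} {i j : Fin N}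

theorem mem_pathSegment {x : Fin N} :
    x ∈ pathSegment j i ↔
      (j.val < x.val ∧ x.val ≤ i.val) ∨ (i.val ≤ x.val ∧ x.val < j.val) := by
  simp only [pathSegment, Finset.mem_union, Finset.mem_Ioc, Finset.mem_Ico, Fin.lt_def,
    Fin.le_def]

theorem card_pathSegment (j i : Fin N) : (pathSegment j i).card = Nat.dist i j := by
  rw [pathSegment, Finset.card_union_of_disjoint, Fin.card_Ioc, Fin.card_Ico, Nat.dist]
  rw [Finset.disjoint_left]
  intro x hx hx'
  simp only [Finset.mem_Ioc, Finset.mem_Ico, Fin.lt_def, Fin.le_def] at hx hx'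
  omega

theorem mem_ltmSS_of_forall_pathSegment {w : Fin m → Fin N → Fin N → ℝ}
    (hw₀ : ∀ k x y, 0 ≤ w k x y)
    (hw : ∀ k, ∀ x ∈ pathSegment j i, ∀ y : Fin N,
      (y.val = x.val + 1 ∨ x.val = y.val + 1) → 1/2 ≤ w k x y)
    (hμ : ∀ x ∈ pathSegment j i, ∃ k, μ x k < 1/2) :
    i ∈ ltmSS w (fun _ => .OR) {j} μ := by
  have hj := subset_ltmSS w (fun _ => .OR) {j} μ (Finset.mem_singleton_self j)
  have hstep : ∀ x y : Fin N, y ∈ pathSegment j i →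
      (x.val = y.val + 1 ∨ y.val = x.val + 1) → ∃ k, μ y k < w k y x := by
    intro x y hy hxy
    obtain ⟨k, hk⟩ := hμ y hy
    exact ⟨k, hk.trans_le (hw k y hy x hxy)⟩
  rcases lt_trichotomy j i with hji | rfl | hij
  · refine mem_ltmSS_of_ascending hw₀ hji.le hj fun x y hx hxy hy => hstep x y ?_ (Or.inr hxy)
    rw [mem_pathSegment]; rw [Fin.le_def] at hx hy; omega
  · exact hj
  · refine mem_ltmSS_of_descending hw₀ hij.le hj fun x y hx hxy hy => hstep x y ?_ (Or.inl hxy)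
    rw [mem_pathSegment]; rw [Fin.le_def] at hx hy; rw [Fin.lt_def] at hij; omega

/-- The blocked agent `a` sees weight at most `1/2` from the seed's side, so activation never
gets past it. -/
theorem ltmSS_repeatedPath_blocked (hμ : ∀ x k, 0 ≤ μ x k) {a x : Fin N} (ha₀ : 1 ≤ a.val)
    (ha₁ : a.val + 2 ≤ N) (hblk : ∀ k, 1/2 ≤ μ a k) (hja : j ≠ a)
    (hx : x ∈ ltmSS (fun _ : Fin m => pathW N) (fun _ => .OR) {j} μ) :
    x ≠ a ∧ (x < a ↔ j < a) := by
  have hsub := ltmSS_subset_of_forall_sum_le (fun _ x y => pathW_nonneg x y)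
    (Finset.univ.filter fun x => x ≠ a ∧ (x < a ↔ j < a)) (by simp [hja]) ?_ hx
  · simpa using hsub
  intro y hy k
  simp only [Finset.mem_filter, Finset.mem_univ, true_and] at hy
  by_cases hya : y = a
  · subst hya
    refine (sum_pathW_le_half ha₀ ha₁ _ fun z hz z' hz' hyz hyz' => ?_).trans (hblk k)
    simp only [Finset.mem_filter, Finset.mem_univ, true_and, Fin.lt_def, Ne, Fin.ext_iff]
      at hz hz'
    ext; omega
  · rw [Finset.sum_eq_zero fun z hz => pathW_eq_zero ?_]
    · exact hμ y k
    simp only [Finset.mem_filter, Finset.mem_univ, true_and, Fin.lt_def, Ne, Fin.ext_iff]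
      at hz hy hya
    omega

theorem mem_ltmSS_repeatedPath_iff (hμ : ∀ x k, 0 ≤ μ x k) (hi₀ : 1 ≤ i.val)
    (hi₁ : i.val + 2 ≤ N) :
    i ∈ ltmSS (fun _ : Fin m => pathW N) (fun _ => .OR) {j} μ ↔
      ∀ x ∈ pathSegment j i, ∃ k, μ x k < 1/2 := by
  refine ⟨fun hi x hx => ?_, mem_ltmSS_of_forall_pathSegment (fun _ x y => pathW_nonneg x y)
    fun _ _ _ _ hxy => half_le_pathW hxy⟩
  by_contra hblk
  simp only [not_exists, not_lt] at hblk
  rw [mem_pathSegment] at hx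
  have := ltmSS_repeatedPath_blocked hμ (a := x) (by omega) (by omega) hblk
    (by rintro rfl; omega) hi
  rw [Fin.lt_def, Fin.lt_def, Ne, Fin.ext_iff] at this
  omega

end Path

noncomputable abbrev permutationW (N : ℕ) : Fin 2 → Fin N → Fin N → ℝ :=
  fun k => if k = 0 then pathW N else permW2 N

section Permutation

variable {N : ℕ} {μ : Fin N → Fin 2 → ℝ} {i j : Fin N}

theorem permutationW_nonneg : ∀ k x y, 0 ≤ permutationW N k x y := by
  intro k x y
  fin_cases k
  · exact pathW_nonneg x y
  · exact permW2_nonneg x y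

theorem mem_ltmSS_permutation_of_forall_pathSegment (hi : i.val + 3 ≤ N) (hj : j.val + 2 ≤ N)
    (hμ : ∀ x ∈ pathSegment j i, ∃ k, μ x k < 1/2) :
    i ∈ ltmSS (permutationW N) (fun _ => .OR) {j} μ := by
  refine mem_ltmSS_of_forall_pathSegment permutationW_nonneg (fun k x hx y hxy => ?_) hμ
  rw [mem_pathSegment] at hx
  fin_cases k
  · exact half_le_pathW hxy
  · exact half_le_permW2 hxy (by omega)

/-- Activation goes the long way round, through the edge `{N - 1, 0}` of the second layer. -/
theorem mem_ltmSS_permutation_of_detour (hN : 3 ≤ N)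
    (hμ : ∀ x ∉ pathSegment i j, ∀ k, μ x k < 1/2) :
    i ∈ ltmSS (permutationW N) (fun _ => .OR) {j} μ := by
  have hj := subset_ltmSS (permutationW N) (fun _ => .OR) {j} μ (Finset.mem_singleton_self j)
  have hstep : ∀ x y : Fin N, y ∉ pathSegment i j →
      (x.val = y.val + 1 ∨ y.val = x.val + 1) → ∃ k, μ y k < permutationW N k y x :=
    fun x y hy hxy => ⟨0, (hμ y hy 0).trans_le (half_le_pathW hxy)⟩
  have hwrap : ∀ x y : Fin N, y ∉ pathSegment i j →
      (y.val + 1 = N ∧ x.val = 0) ∨ (y.val = 0 ∧ x.val + 1 = N) →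
      μ y 1 < permutationW N 1 y x :=
    fun x y hy hxy => (hμ y hy 1).trans_le (half_le_permW2_of_wrap hN hxy)
  have hi := i.isLt
  have hj' := j.isLt
  rcases lt_trichotomy j i with hji | rfl | hij
  · rw [Fin.lt_def] at hji
    have h0 := mem_ltmSS_of_descending permutationW_nonneg (b := ⟨0, by omega⟩)
      (Fin.le_def.2 (Nat.zero_le _)) hj fun x y _ hxy _ =>
        hstep x y (by rw [mem_pathSegment]; omega) (Or.inl hxy)
    have hlast := mem_ltmSS_of_lt_weight permutationW_nonneg h0 (y := ⟨N - 1, by omega⟩)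
      (hwrap _ _ (by rw [mem_pathSegment]; simp only; omega)
        (Or.inl ⟨by simp only; omega, rfl⟩))
    refine mem_ltmSS_of_descending permutationW_nonneg (by rw [Fin.le_def]; simp only; omega)
      hlast fun x y _ hxy hy => hstep x y ?_ (Or.inl hxy)
    rw [Fin.le_def] at hy; rw [mem_pathSegment]; omega
  · exact hj
  · rw [Fin.lt_def] at hij
    have hlast := mem_ltmSS_of_ascending permutationW_nonneg (b := ⟨N - 1, by omega⟩)
      (by rw [Fin.le_def]; simp only; omega) hj fun x y hx hxy _ =>
        hstep x y (by rw [Fin.le_def] at hx; rw [mem_pathSegment]; omega) (Or.inr hxy)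
    have h0 := mem_ltmSS_of_lt_weight permutationW_nonneg hlast (y := ⟨0, by omega⟩)
      (hwrap _ _ (by rw [mem_pathSegment]; simp only; omega)
        (Or.inr ⟨rfl, by simp only; omega⟩))
    refine mem_ltmSS_of_ascending permutationW_nonneg (Fin.le_def.2 (Nat.zero_le _)) h0
      fun x y _ hxy hy => hstep x y ?_ (Or.inr hxy)
    rw [Fin.le_def] at hy; rw [mem_pathSegment]; omega

end Permutation

section Thresholds

instance : IsProbabilityMeasure (volume.restrict (Set.Icc (0:ℝ) 1)) := ⟨by simp⟩

noncomputable abbrev thresholdLaw (m : ℕ) : Measure (Fin m → ℝ) :=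
  Measure.pi fun _ => volume.restrict (Set.Icc (0:ℝ) 1)

instance (n m : ℕ) : IsProbabilityMeasure (thMeasure n m) := by
  unfold thMeasure; infer_instance

theorem volume_Icc_restrict_Ici_half :
    volume.restrict (Set.Icc (0:ℝ) 1) (Set.Ici (1/2)) = 2⁻¹ := by
  rw [Measure.restrict_apply measurableSet_Ici,
    show Set.Ici (1/2 : ℝ) ∩ Set.Icc 0 1 = Set.Icc (1/2) 1 by
      ext x; simp only [Set.mem_inter_iff, Set.mem_Ici, Set.mem_Icc]; constructor
      · rintro ⟨h1, -, h2⟩; exact ⟨h1, h2⟩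
      · rintro ⟨h1, h2⟩; exact ⟨h1, by linarith, h2⟩,
    Real.volume_Icc]
  norm_num
  rw [one_div, ENNReal.ofReal_inv_of_pos two_pos]
  simp

theorem volume_Icc_restrict_Iio_half :
    volume.restrict (Set.Icc (0:ℝ) 1) (Set.Iio (1/2)) = 2⁻¹ := by
  rw [← Set.compl_Ici, prob_compl_eq_one_sub measurableSet_Ici, volume_Icc_restrict_Ici_half,
    ENNReal.one_sub_inv_two]

theorem setOf_forall_half_le (m : ℕ) :
    {g : Fin m → ℝ | ∀ k, 1/2 ≤ g k} = Set.univ.pi fun _ => Set.Ici (1/2) := by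
  ext; simp only [Set.mem_ofPred_eq, Set.mem_univ_pi, Set.mem_Ici]

theorem setOf_forall_lt_half (m : ℕ) :
    {g : Fin m → ℝ | ∀ k, g k < 1/2} = Set.univ.pi fun _ => Set.Iio (1/2) := by
  ext; simp only [Set.mem_ofPred_eq, Set.mem_univ_pi, Set.mem_Iio]

theorem measurableSet_forall_half_le (m : ℕ) :
    MeasurableSet {g : Fin m → ℝ | ∀ k, 1/2 ≤ g k} := by
  rw [setOf_forall_half_le]; exact MeasurableSet.univ_pi fun _ => measurableSet_Ici

theorem measurableSet_forall_lt_half (m : ℕ) :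
    MeasurableSet {g : Fin m → ℝ | ∀ k, g k < 1/2} := by
  rw [setOf_forall_lt_half]; exact MeasurableSet.univ_pi fun _ => measurableSet_Iio

theorem thresholdLaw_forall_half_le (m : ℕ) :
    thresholdLaw m {g | ∀ k, 1/2 ≤ g k} = 2⁻¹ ^ m := by
  rw [setOf_forall_half_le, Measure.pi_pi, Finset.prod_const, Finset.card_univ,
    Fintype.card_fin, volume_Icc_restrict_Ici_half]

theorem thresholdLaw_forall_lt_half (m : ℕ) :
    thresholdLaw m {g | ∀ k, g k < 1/2} = 2⁻¹ ^ m := by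
  rw [setOf_forall_lt_half, Measure.pi_pi, Finset.prod_const, Finset.card_univ,
    Fintype.card_fin, volume_Icc_restrict_Iio_half]

theorem thresholdLaw_exists_lt_half (m : ℕ) :
    thresholdLaw m {g | ∃ k, g k < 1/2} = 1 - 2⁻¹ ^ m := by
  have hcompl : {g : Fin m → ℝ | ∃ k, g k < 1/2} = {g | ∀ k, 1/2 ≤ g k}ᶜ := by
    ext; simp
  rw [hcompl, prob_compl_eq_one_sub (measurableSet_forall_half_le m),
    thresholdLaw_forall_half_le]

theorem thMeasure_pi {n m : ℕ} (s : Finset (Fin n)) (t : Fin n → Set (Fin m → ℝ)) :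
    thMeasure n m ((s : Set (Fin n)).pi t) = ∏ a ∈ s, thresholdLaw m (t a) := by
  classical
  rw [← Set.pi_univ_ite, thMeasure, Measure.pi_pi]
  simp [apply_ite, Finset.prod_ite_mem]

theorem ae_nonneg_thMeasure (n m : ℕ) : ∀ᵐ μ ∂thMeasure n m, ∀ a k, 0 ≤ μ a k := by
  have h01 : ∀ᵐ t ∂volume.restrict (Set.Icc (0:ℝ) 1), 0 ≤ t :=
    (ae_restrict_mem measurableSet_Icc).mono fun t ht => ht.1
  simp only [ae_all_iff]
  intro a k
  exact (measurePreserving_eval (fun _ : Fin n => thresholdLaw m) a).quasiMeasurePreserving.ae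
    ((measurePreserving_eval (fun _ : Fin m => volume.restrict (Set.Icc (0:ℝ) 1)) k)
      |>.quasiMeasurePreserving.ae h01)

end Thresholds

theorem measure_lt_of_ae_eq_of_disjoint {α : Type*} [MeasurableSpace α] {ν : Measure α}
    [IsFiniteMeasure ν] {E F C D : Set α} (hE : E =ᵐ[ν] C) (hC : C ⊆ F) (hD : D ⊆ F)
    (hCD : Disjoint C D) (hDm : MeasurableSet D) (hD₀ : ν D ≠ 0) : ν E < ν F :=
  calc ν E = ν C := measure_congr hE
    _ < ν C + ν D := ENNReal.lt_add_right (measure_ne_top ν C) hD₀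
    _ = ν (C ∪ D) := (measure_union hCD hDm).symm
    _ ≤ ν F := measure_mono (Set.union_subset hC hD)

section Probabilities

variable {N m : ℕ} {i j : Fin N}

theorem setOf_mem_ltmSS_repeatedPath_ae_eq (hi₀ : 1 ≤ i.val) (hi₁ : i.val + 2 ≤ N) :
    {μ | i ∈ ltmSS (fun _ : Fin m => pathW N) (fun _ => .OR) {j} μ} =ᵐ[thMeasure N m]
      (pathSegment j i : Set (Fin N)).pi fun _ => {g | ∃ k, g k < 1/2} := by
  refine Filter.eventuallyEq_set.2 ?_
  filter_upwards [ae_nonneg_thMeasure N m] with μ hμ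
  simp only [Set.mem_ofPred_eq, Set.mem_pi, Finset.mem_coe,
    mem_ltmSS_repeatedPath_iff hμ hi₀ hi₁]

theorem pLTM_repeatedPath (hi₀ : 1 ≤ i.val) (hi₁ : i.val + 2 ≤ N) :
    pLTM (fun _ : Fin m => pathW N) (fun _ => .OR) {j} i =
      (1 - 2⁻¹ ^ m) ^ Nat.dist i.val j.val := by
  rw [pLTM, measure_congr (setOf_mem_ltmSS_repeatedPath_ae_eq hi₀ hi₁), thMeasure_pi,
    Finset.prod_const, thresholdLaw_exists_lt_half, card_pathSegment, ENNReal.toReal_pow,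
    ENNReal.toReal_sub_of_le (pow_le_one₀ (by simp) (by simp)) ENNReal.one_ne_top]
  simp

theorem pLTM_repeatedPath_lt_permutation (hi₀ : 1 ≤ i.val) (hi₁ : i.val + 3 ≤ N)
    (hj : j.val + 2 ≤ N) (hij : 2 ≤ Nat.dist i.val j.val) :
    pLTM (fun _ : Fin 2 => pathW N) (fun _ => .OR) {j} i <
      pLTM (permutationW N) (fun _ => .OR) {j} i := by
  set a₀ : Fin N := ⟨(i.val + j.val) / 2, by omega⟩
  have ha₀ : a₀ ∈ pathSegment j i ∧ a₀ ∈ pathSegment i j := by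
    simp only [mem_pathSegment, a₀]; unfold Nat.dist at hij; omega
  refine (ENNReal.toReal_lt_toReal (measure_ne_top _ _) (measure_ne_top _ _)).2 <|
    measure_lt_of_ae_eq_of_disjoint (setOf_mem_ltmSS_repeatedPath_ae_eq hi₀ (by omega))
      (D := ((insert a₀ (pathSegment i j)ᶜ : Finset (Fin N)) : Set (Fin N)).pi fun x =>
        if x = a₀ then {g | ∀ k, 1/2 ≤ g k} else {g | ∀ k, g k < 1/2})
      (fun μ hμ => mem_ltmSS_permutation_of_forall_pathSegment hi₁ hj hμ) ?_ ?_ ?_ ?_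
  · intro μ hμ
    refine mem_ltmSS_permutation_of_detour (by omega) fun x hx => ?_
    have := hμ x (by simp [hx])
    dsimp only at this
    rwa [if_neg (by rintro rfl; exact hx ha₀.2)] at this
  · refine Set.disjoint_left.2 fun μ hC hD => ?_
    obtain ⟨k, hk⟩ := hC a₀ ha₀.1
    have := hD a₀ (by simp)
    dsimp only at this
    rw [if_pos rfl] at this
    exact (this k).not_gt hk
  · refine MeasurableSet.pi (Finset.countable_toSet _) fun x _ => ?_
    split_ifs
    exacts [measurableSet_forall_half_le 2, measurableSet_forall_lt_half 2]
  · rw [thMeasure_pi, Finset.prod_ne_zero_iff]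
    intro x _
    split_ifs
    · rw [thresholdLaw_forall_half_le]; simp
    · rw [thresholdLaw_forall_lt_half]; simp

end Probabilities

theorem permutation_beats_repeated_path_OR_general (N : ℕ) (i j : Fin N)
    (hi1 : 2 ≤ i.val) (hi2 : i.val ≤ N - 4)
    (hj2 : j.val ≤ N - 3)
    (hd : 2 < Nat.dist i.val j.val) :
    (pLTM (fun k : Fin 2 => if k = 0 then pathW N else permW2 N)
        (fun _ => Protocol.OR) {j} i >
      pLTM (fun _ : Fin 2 => pathW N) (fun _ => Protocol.OR) {j} i) ∧
    (pLTM (fun _ : Fin 2 => pathW N) (fun _ => Protocol.OR) {j} i =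
      (3/4 : ℝ) ^ (Nat.dist i.val j.val)) ∧
    ((3/4 : ℝ) ^ (Nat.dist i.val j.val) +
        (1/2 : ℝ) * (3/4 : ℝ) ^ (N - Nat.dist i.val j.val - 3) -
        (1/2 : ℝ) * (3/4 : ℝ) ^ (N - 5) >
      (3/4 : ℝ) ^ (Nat.dist i.val j.val)) := by
  have hdist : Nat.dist i.val j.val = i.val - j.val + (j.val - i.val) := rfl
  have hjN := j.isLt
  refine ⟨pLTM_repeatedPath_lt_permutation (by omega) (by omega) (by omega) hd.le, ?_, ?_⟩
  · rw [pLTM_repeatedPath (by omega) (by omega)]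
    norm_num
  · have := pow_lt_pow_right_of_lt_one₀ (show (0:ℝ) < 3/4 by norm_num) (by norm_num)
      (show N - Nat.dist i.val j.val - 3 < N - 5 by omega)
    linarith

/-- under Protocol OR the permutation network spreads strictly more
than the repeated path network: for `N ≥ 8`, seed `{j}`, indices as in Statement 10
with additionally `|i−j| > 2`,
ℙ^{𝒢_P, OR}(i) > ℙ^{𝒢_R, OR}(i) = (3/4)^{|i−j|}; equivalently,
(3/4)^{|i−j|} + (1/2)(3/4)^{N−|i−j|−3} − (1/2)(3/4)^{N−5} > (3/4)^{|i−j|}. -/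
theorem permutation_beats_repeated_path_OR (N : ℕ) (hN : 8 ≤ N) (i j : Fin N)
    (hi1 : 2 ≤ i.val) (hi2 : i.val ≤ N - 4)
    (hj1 : 1 ≤ j.val) (hj2 : j.val ≤ N - 3)
    (hd : 2 < Nat.dist i.val j.val) :
    (pLTM (fun k : Fin 2 => if k = 0 then pathW N else permW2 N)
        (fun _ => Protocol.OR) {j} i >
      pLTM (fun _ : Fin 2 => pathW N) (fun _ => Protocol.OR) {j} i) ∧
    (pLTM (fun _ : Fin 2 => pathW N) (fun _ => Protocol.OR) {j} i =
      (3/4 : ℝ) ^ (Nat.dist i.val j.val)) ∧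
    ((3/4 : ℝ) ^ (Nat.dist i.val j.val) +
        (1/2 : ℝ) * (3/4 : ℝ) ^ (N - Nat.dist i.val j.val - 3) -
        (1/2 : ℝ) * (3/4 : ℝ) ^ (N - 5) >
      (3/4 : ℝ) ^ (Nat.dist i.val j.val)) :=
  permutation_beats_repeated_path_OR_general N i j hi1 hi2 hj2 hd
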